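/- arXiv:1512.04700 — 5 statements merged into one kernel-verified Lean document; each statement's English description precedes it below -/
import Mathlib

section
/- Let D be a triangulated category with coproducts, τ = (U, U^⊥[1]) a t-structure on D with heart H = U ∩ U^⊥[1] and co-heart C = U ∩ ^⊥(U[1]), and let H̃ : D → H be the associated cohomological functor. Then the restriction of H̃ to C is fully faithful, and H̃(C) is a projective object of H for every C in C. -/
open CategoryTheory CategoryTheory.Limits CategoryTheory.Pretriangulated

universe v u

variable (C : Type u) [Category.{v} C] [Preadditive C] [HasZeroObject C]
  [HasShift C ℤ] [∀ n : ℤ, (CategoryTheory.shiftFunctor C n).Additive] [Pretriangulated C]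

/-- The right orthogonal `S^⊥` of a class of objects. -/
def rPerp (S : Set C) : Set C := {Y | ∀ ⦃X : C⦄, X ∈ S → ∀ f : X ⟶ Y, f = 0}

/-- The heart `U ∩ U^⊥[1]` of a t-structure with aisle `U`. -/
def heartSet (U : Set C) : Set C := {X | X ∈ U ∧ X⟦(-1 : ℤ)⟧ ∈ rPerp C U}

/-- The co-heart `U ∩ ^⊥(U[1])` of a t-structure with aisle `U`. -/
def coheartSet (U : Set C) : Set C :=
  {X | X ∈ U ∧ ∀ ⦃Y : C⦄, Y ∈ U → ∀ f : X ⟶ Y⟦(1 : ℤ)⟧, f = 0}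

/-- The cohomological functor `H̃ = τ^{U^⊥[1]} ∘ τ_U` associated to a t-structure, expressed
via the truncation functors `tU = τ_U` and `tV = τ^{U^⊥}`. -/
noncomputable def Htilde (tU tV : C ⥤ C) : C ⥤ C :=
  tU ⋙ CategoryTheory.shiftFunctor C (-1 : ℤ) ⋙ tV ⋙ CategoryTheory.shiftFunctor C (1 : ℤ)

/- ### Auxiliary material -/

section Aux

/-- Post-composition bijectivity from a distinguished triangle. -/
lemma bij_postcomp (T : Triangle C) (hT : T ∈ distTriang C) (P : C)
    (h1 : ∀ f : P ⟶ T.obj₁, f = 0) (h1' : ∀ f : P ⟶ T.obj₁⟦(1:ℤ)⟧, f = 0) :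
    Function.Bijective (fun f : P ⟶ T.obj₂ => f ≫ T.mor₂) := by
  constructor
  · intro f g hfg
    dsimp at hfg
    rw [← sub_eq_zero]
    obtain ⟨k, hk⟩ := Triangle.coyoneda_exact₂ T hT (f - g)
      (by rw [Preadditive.sub_comp, hfg, sub_self])
    rw [hk, h1 k, zero_comp]
  · intro f
    obtain ⟨g, hg⟩ := Triangle.coyoneda_exact₃ T hT f (h1' _)
    exact ⟨g, hg.symm⟩

/-- Pre-composition bijectivity from a distinguished triangle. -/
lemma bij_precomp (T : Triangle C) (hT : T ∈ distTriang C) (Y : C)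
    (h1 : ∀ f : T.obj₁ ⟶ Y, f = 0) (h1' : ∀ f : T.obj₁⟦(1:ℤ)⟧ ⟶ Y, f = 0) :
    Function.Bijective (fun g : T.obj₃ ⟶ Y => T.mor₂ ≫ g) := by
  constructor
  · intro f g hfg
    dsimp at hfg
    rw [← sub_eq_zero]
    obtain ⟨k, hk⟩ := Triangle.yoneda_exact₃ T hT (f - g)
      (by rw [Preadditive.comp_sub, hfg, sub_self])
    rw [hk, h1' k, comp_zero]
  · intro f
    obtain ⟨g, hg⟩ := Triangle.yoneda_exact₂ T hT f (h1 _)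
    exact ⟨g, hg.symm⟩

lemma bij_neg_post {P Q R : C} (v : Q ⟶ R)
    (h : Function.Bijective (fun f : P ⟶ Q => f ≫ (-v))) :
    Function.Bijective (fun f : P ⟶ Q => f ≫ v) := by
  have e : (fun f : P ⟶ Q => f ≫ v) = (fun g : P ⟶ R => -g) ∘ (fun f : P ⟶ Q => f ≫ (-v)) := by
    funext f
    simp
  rw [e]
  exact neg_involutive.bijective.comp h

lemma bij_neg_pre {P Q R : C} (v : P ⟶ Q)
    (h : Function.Bijective (fun g : Q ⟶ R => (-v) ≫ g)) :
    Function.Bijective (fun g : Q ⟶ R => v ≫ g) := by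
  have e : (fun g : Q ⟶ R => v ≫ g) = (fun p : P ⟶ R => -p) ∘ (fun g : Q ⟶ R => (-v) ≫ g) := by
    funext g
    simp
  rw [e]
  exact neg_involutive.bijective.comp h

lemma bij_iso_pre {P P' Q : C} (e : P ⟶ P') [IsIso e] :
    Function.Bijective (fun g : P' ⟶ Q => e ≫ g) := by
  constructor
  · intro f g h
    dsimp at h
    exact (cancel_epi e).1 h
  · intro f
    exact ⟨inv e ≫ f, by simp⟩

lemma bij_iso_post {P Q Q' : C} (e : Q ⟶ Q') [IsIso e] :
    Function.Bijective (fun f : P ⟶ Q => f ≫ e) := by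
  constructor
  · intro f g h
    dsimp at h
    exact (cancel_mono e).1 h
  · intro f
    exact ⟨f ≫ inv e, by simp⟩

/-- The comparison map `tU X ⟶ H̃ X`. -/
noncomputable def w0 (tU tV : C ⥤ C) (β : 𝟭 C ⟶ tV) (X : C) :
    tU.obj X ⟶ (Htilde C tU tV).obj X :=
  (shiftNegShift (tU.obj X) (1:ℤ)).inv ≫
    (shiftFunctor C (1:ℤ)).map (β.app ((tU.obj X)⟦(-1:ℤ)⟧))

lemma w0_natural (tU tV : C ⥤ C) (β : 𝟭 C ⟶ tV) {X Y : C} (f : X ⟶ Y) :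
    tU.map f ≫ w0 C tU tV β Y = w0 C tU tV β X ≫ (Htilde C tU tV).map f := by
  have hnat : (shiftFunctorCompIsoId C (-1:ℤ) (1:ℤ) (neg_add_cancel 1)).inv.app (tU.obj X) ≫
      (shiftFunctor C (1:ℤ)).map ((shiftFunctor C (-1:ℤ)).map (tU.map f)) =
      tU.map f ≫ (shiftFunctorCompIsoId C (-1:ℤ) (1:ℤ) (neg_add_cancel 1)).inv.app (tU.obj Y) := by
    simpa using
      ((shiftFunctorCompIsoId C (-1:ℤ) (1:ℤ) (neg_add_cancel 1)).inv.naturality (tU.map f)).symm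
  have hb : β.app ((shiftFunctor C (-1:ℤ)).obj (tU.obj X)) ≫
      tV.map ((shiftFunctor C (-1:ℤ)).map (tU.map f)) =
      (shiftFunctor C (-1:ℤ)).map (tU.map f) ≫ β.app ((shiftFunctor C (-1:ℤ)).obj (tU.obj Y)) := by
    simpa using (β.naturality ((shiftFunctor C (-1:ℤ)).map (tU.map f))).symm
  dsimp only [w0, Htilde, Functor.comp_map]
  rw [Category.assoc, ← Functor.map_comp, hb, Functor.map_comp, ← Category.assoc, ← Category.assoc]
  erw [hnat]
  rfl

/-- The comparison map `c ⟶ H̃ c` when `α.app c` is invertible. -/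
noncomputable def wmap (tU tV : C ⥤ C) (α : tU ⟶ 𝟭 C) (β : 𝟭 C ⟶ tV) (c : C)
    (hc : IsIso (α.app c)) : c ⟶ (Htilde C tU tV).obj c :=
  letI := hc
  inv (α.app c) ≫ w0 C tU tV β c

lemma wmap_natural (tU tV : C ⥤ C) (α : tU ⟶ 𝟭 C) (β : 𝟭 C ⟶ tV) {c c' : C}
    (hc : IsIso (α.app c)) (hc' : IsIso (α.app c')) (f : c ⟶ c') :
    wmap C tU tV α β c hc ≫ (Htilde C tU tV).map f = f ≫ wmap C tU tV α β c' hc' := by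
  letI := hc
  letI := hc'
  dsimp [wmap]
  rw [Category.assoc, ← w0_natural, ← Category.assoc, ← Category.assoc]
  congr 1
  rw [IsIso.inv_comp_eq, ← Category.assoc, IsIso.eq_comp_inv]
  simpa using α.naturality f

end Aux

/-- Given a t-structure `(U, U^⊥[1])` on a triangulated category with coproducts, with
truncation functors `tU ⊣ incl`, `incl ⊣ tV` exhibited by natural truncation triangles
`tU X → X → tV X → (tU X)⟦1⟧`, the restriction of the associated cohomological functor
`H̃` to the co-heart is fully faithful and takes values in projective objects of the
heart (projectivity being expressed by the lifting property along the epimorphisms of the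
heart, i.e. the distinguished triangles `K → M → N → K⟦1⟧` with all three vertices in
the heart). -/
theorem stmt5 [HasCoproducts.{v} C] (U : Set C)
    (hiso : ∀ ⦃X Y : C⦄, (X ≅ Y) → X ∈ U → Y ∈ U)
    (hshift : ∀ ⦃X : C⦄, X ∈ U → X⟦(1 : ℤ)⟧ ∈ U)
    (tU tV : C ⥤ C) (α : tU ⟶ 𝟭 C) (β : 𝟭 C ⟶ tV)
    (δ : ∀ X : C, tV.obj X ⟶ (tU.obj X)⟦(1 : ℤ)⟧)
    (htU : ∀ X : C, tU.obj X ∈ U) (htV : ∀ X : C, tV.obj X ∈ rPerp C U)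
    (htri : ∀ X : C, Triangle.mk (α.app X) (β.app X) (δ X) ∈ distTriang C) :
    (∀ (c c' : C), c ∈ coheartSet C U → c' ∈ coheartSet C U →
      Function.Bijective (fun f : c ⟶ c' => (Htilde C tU tV).map f)) ∧
    (∀ (c : C), c ∈ coheartSet C U →
      ∀ (K M N : C), K ∈ heartSet C U → M ∈ heartSet C U → N ∈ heartSet C U →
      ∀ (f : K ⟶ M) (g : M ⟶ N) (h : N ⟶ K⟦(1 : ℤ)⟧),
        Triangle.mk f g h ∈ (distTriang C) →
        ∀ φ : (Htilde C tU tV).obj c ⟶ N, ∃ ψ : (Htilde C tU tV).obj c ⟶ M, ψ ≫ g = φ) := by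
  classical
  -- `α.app X` is an isomorphism for `X ∈ U`.
  have hiso_alpha : ∀ ⦃X : C⦄, X ∈ U → IsIso (α.app X) := by
    intro X hX
    have hβ : β.app X = 0 := htV X hX _
    have h3 : IsZero (tV.obj X) := by
      rw [IsZero.iff_id_eq_zero]
      obtain ⟨k, hk⟩ := Triangle.yoneda_exact₃ _ (htri X) (𝟙 (tV.obj X))
        (by dsimp; rw [hβ]; exact zero_comp)
      rw [hk, htV X (hshift (htU X)) k]
      exact comp_zero
    exact (Triangle.isZero₃_iff_isIso₁ _ (htri X)).1 h3
  -- shifted truncation triangles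
  have htri3 : ∀ X : C,
      ((Triangle.mk (α.app X) (β.app X) (δ X)).rotate.rotate.rotate ∈ distTriang C) :=
    fun X => rot_of_distTriang _ (rot_of_distTriang _ (rot_of_distTriang _ (htri X)))
  -- bijectivity of postcomposition with the middle map of the shifted triangle
  have hv_post : ∀ (c : C), c ∈ coheartSet C U → ∀ (Z : C),
      Function.Bijective (fun f : c ⟶ (Z⟦(-1:ℤ)⟧)⟦(1:ℤ)⟧ =>
        f ≫ (shiftFunctor C (1:ℤ)).map (β.app (Z⟦(-1:ℤ)⟧))) := by
    intro c hc Z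
    apply bij_neg_post
    exact bij_postcomp C _ (htri3 (Z⟦(-1:ℤ)⟧)) c
      (fun f => hc.2 (htU _) f) (fun f => hc.2 (hshift (htU _)) f)
  -- bijectivity of precomposition with the middle map of the shifted triangle
  have hv_pre : ∀ (Z Y : C)
      (hY : ∀ ⦃A : C⦄, A ∈ U → ∀ f : A⟦(1:ℤ)⟧ ⟶ Y, f = 0),
      Function.Bijective (fun g : (tV.obj (Z⟦(-1:ℤ)⟧))⟦(1:ℤ)⟧ ⟶ Y =>
        (shiftFunctor C (1:ℤ)).map (β.app (Z⟦(-1:ℤ)⟧)) ≫ g) := by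
    intro Z Y hY
    apply bij_neg_pre
    exact bij_precomp C _ (htri3 (Z⟦(-1:ℤ)⟧)) Y
      (fun f => hY (htU _) f) (fun f => hY (hshift (htU _)) f)
  -- bijectivity of postcomposition with `wmap c'`
  have hw_post : ∀ (c c' : C), c ∈ coheartSet C U → ∀ (h' : IsIso (α.app c')),
      Function.Bijective (fun f : c ⟶ c' =>
        f ≫ wmap C tU tV α β c' h') := by
    intro c c' hc h'
    have e : (fun f : c ⟶ c' => f ≫ wmap C tU tV α β c' h') =
        (fun f : c ⟶ ((tU.obj c')⟦(-1:ℤ)⟧)⟦(1:ℤ)⟧ =>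
          f ≫ (shiftFunctor C (1:ℤ)).map (β.app ((tU.obj c')⟦(-1:ℤ)⟧))) ∘
        (fun f : c ⟶ c' =>
          f ≫ ((letI := h'; inv (α.app _)) ≫ (shiftNegShift (tU.obj c') (1:ℤ)).inv)) := by
      funext f
      simp only [wmap, w0, Function.comp_apply, Category.assoc]
      rfl
    rw [e]
    exact (hv_post c hc (tU.obj c')).comp (bij_iso_post C _)
  -- bijectivity of precomposition with `wmap c`
  have hw_pre : ∀ (c : C), c ∈ coheartSet C U → ∀ (h' : IsIso (α.app c)) (Y : C),
      (∀ ⦃A : C⦄, A ∈ U → ∀ f : A⟦(1:ℤ)⟧ ⟶ Y, f = 0) →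
      Function.Bijective (fun g : (Htilde C tU tV).obj c ⟶ Y =>
        wmap C tU tV α β c h' ≫ g) := by
    intro c hc h' Y hY
    have e : (fun g : (Htilde C tU tV).obj c ⟶ Y => wmap C tU tV α β c h' ≫ g) =
        (fun p : ((tU.obj c)⟦(-1:ℤ)⟧)⟦(1:ℤ)⟧ ⟶ Y =>
          ((letI := h'; inv (α.app _)) ≫ (shiftNegShift (tU.obj c) (1:ℤ)).inv) ≫ p) ∘
        (fun g : (tV.obj ((tU.obj c)⟦(-1:ℤ)⟧))⟦(1:ℤ)⟧ ⟶ Y =>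
          (shiftFunctor C (1:ℤ)).map (β.app ((tU.obj c)⟦(-1:ℤ)⟧)) ≫ g) := by
      funext g
      simp only [wmap, w0]
      dsimp only [Function.comp_def]
      simp only [Category.assoc]
      exact congrArg _ (Category.assoc _ _ _)
    rw [e]
    exact (bij_iso_pre C _).comp (hv_pre (tU.obj c) Y hY)
  -- vanishing into shifted `tV` objects
  have hvanV : ∀ (Z : C) ⦃A : C⦄, A ∈ U → ∀ f : A⟦(1:ℤ)⟧ ⟶ (tV.obj Z)⟦(1:ℤ)⟧, f = 0 := by
    intro Z A hA f
    obtain ⟨g, rfl⟩ := (shiftFunctor C (1:ℤ)).map_surjective f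
    rw [htV Z hA g, Functor.map_zero]
  -- vanishing into heart objects
  have hvanH : ∀ ⦃Y : C⦄, Y ∈ heartSet C U → ∀ ⦃A : C⦄, A ∈ U →
      ∀ f : A⟦(1:ℤ)⟧ ⟶ Y, f = 0 := by
    intro Y hY A hA f
    have hg : (shiftShiftNeg A (1:ℤ)).inv ≫ (shiftFunctor C (-1:ℤ)).map f = 0 :=
      hY.2 hA _
    have h0 : (shiftFunctor C (-1:ℤ)).map f = 0 := by
      rw [← cancel_epi (shiftShiftNeg A (1:ℤ)).inv, hg, comp_zero]
    exact (shiftFunctor C (-1:ℤ)).map_injective (by rw [h0, Functor.map_zero])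
  constructor
  · -- full faithfulness
    intro c c' hc hc'
    have h1 : IsIso (α.app c) := hiso_alpha hc.1
    have h2 : IsIso (α.app c') := hiso_alpha hc'.1
    have key : (fun g : (Htilde C tU tV).obj c ⟶ (Htilde C tU tV).obj c' =>
          wmap C tU tV α β c h1 ≫ g) ∘
        (fun f : c ⟶ c' => (Htilde C tU tV).map f) =
        (fun f : c ⟶ c' => f ≫ wmap C tU tV α β c' h2) := by
      funext f
      exact wmap_natural C tU tV α β h1 h2 f
    have hpre := hw_pre c hc h1 ((Htilde C tU tV).obj c') (hvanV ((tU.obj c')⟦(-1:ℤ)⟧))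
    rw [← Function.Bijective.of_comp_iff' hpre (fun f : c ⟶ c' => (Htilde C tU tV).map f),
      key]
    exact hw_post c c' hc h2
  · -- projectivity
    intro c hc K M N hK hM hN f g h hT φ
    have h1 : IsIso (α.app c) := hiso_alpha hc.1
    set w := wmap C tU tV α β c h1 with hw
    obtain ⟨ψ₁, hψ₁⟩ := Triangle.coyoneda_exact₃ _ hT (w ≫ φ)
      (by
        refine (Category.assoc _ _ _).trans ?_
        exact hc.2 hK.1 _)
    have hψ₁' : w ≫ φ = ψ₁ ≫ g := hψ₁
    obtain ⟨ψ, hψ⟩ := (hw_pre c hc h1 M (hvanH hM)).2 ψ₁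
    refine ⟨ψ, (hw_pre c hc h1 N (hvanH hN)).1 ?_⟩
    dsimp at hψ ⊢
    rw [← Category.assoc, hψ]
    exact hψ₁'.symm
end

section
/- Let D be a triangulated category with coproducts, τ = (U, U^⊥[1]) a t-structure on D with co-heart C and associated cohomological functor H̃ : D → H. For any object C of the co-heart, the functor Hom_H(H̃(C), ?) : H → Ab is naturally isomorphic to the restriction of Hom_D(C, ?) to H. Consequently, for any object U of the aisle U, the map Hom_D(C, U) → Hom_D(C, H̃(U)) induced by the truncation morphism U → H̃(U) is an isomorphism. -/
open CategoryTheory CategoryTheory.Limits CategoryTheory.Pretriangulated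

universe v u

variable (C : Type u) [Category.{v} C] [Preadditive C] [HasZeroObject C]
  [HasShift C ℤ] [∀ n : ℤ, (CategoryTheory.shiftFunctor C n).Additive] [Pretriangulated C]

/-- Given the coaisle truncation functor `tV = τ^{U^⊥}` with unit `β : 𝟭 ⟶ tV`, this is the
canonical truncation morphism `p_X : X ⟶ τ^{U^⊥[1]}X = (tV(X⟦-1⟧))⟦1⟧`; for `X` in the aisle
its target is the value `H̃(X)` of the associated cohomological functor at `X`. -/
noncomputable def truncMap (tV : C ⥤ C) (β : 𝟭 C ⟶ tV) (X : C) :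
    X ⟶ (tV.obj (X⟦(-1 : ℤ)⟧))⟦(1 : ℤ)⟧ :=
  (shiftFunctorCompIsoId C (-1 : ℤ) (1 : ℤ) (by norm_num)).inv.app X ≫
    (CategoryTheory.shiftFunctor C (1 : ℤ)).map (β.app (X⟦(-1 : ℤ)⟧))

section Helpers

lemma bij_of_comp' {α β γ : Sort*} {f : α → β} {g : β → γ}
    (hgf : Function.Bijective (g ∘ f)) (hg : Function.Injective g) :
    Function.Bijective f :=
  ⟨fun _ _ h => hgf.1 (congrArg g h),
   fun y => let ⟨x, hx⟩ := hgf.2 (g y); ⟨x, hg hx⟩⟩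

variable {E : Type*} [Category E]

lemma precomp_bij {X Y : E} (Z : E) (p : X ⟶ Y) [IsIso p] :
    Function.Bijective (fun g : Y ⟶ Z => p ≫ g) :=
  ⟨fun _ _ h => by simpa using congrArg (fun g => inv p ≫ g) h,
   fun g => ⟨inv p ≫ g, by simp⟩⟩

lemma functor_map_bij' {D : Type*} [Category D] (F : E ⥤ D) [F.Full] [F.Faithful]
    (X Y : E) : Function.Bijective (fun f : X ⟶ Y => F.map f) :=
  ⟨fun _ _ h => F.map_injective h, fun g => ⟨F.preimage g, F.map_preimage g⟩⟩

end Helpers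

/-- Transport of a covariant hom-bijection along the shift. -/
lemma shifted_precomp_bij
    (e : CategoryTheory.shiftFunctor C (-1 : ℤ) ⋙ CategoryTheory.shiftFunctor C (1 : ℤ) ≅ 𝟭 C)
    {a X B : C} (b : X⟦(-1 : ℤ)⟧ ⟶ B)
    (hb : Function.Bijective (fun g : a⟦(-1 : ℤ)⟧ ⟶ X⟦(-1 : ℤ)⟧ => g ≫ b)) :
    Function.Bijective
      (fun f : a ⟶ X => f ≫ e.inv.app X ≫ (CategoryTheory.shiftFunctor C (1 : ℤ)).map b) := by
  have hfun : (fun f : a ⟶ X => f ≫ e.inv.app X ≫ (CategoryTheory.shiftFunctor C (1 : ℤ)).map b)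
      = (fun g : a⟦(-1 : ℤ)⟧ ⟶ B =>
          e.inv.app a ≫ (CategoryTheory.shiftFunctor C (1 : ℤ)).map g) ∘
        (fun g : a⟦(-1 : ℤ)⟧ ⟶ X⟦(-1 : ℤ)⟧ => g ≫ b) ∘
        (fun f : a ⟶ X => (CategoryTheory.shiftFunctor C (-1 : ℤ)).map f) := by
    funext f
    have hn := e.inv.naturality f
    simp only [Functor.comp_map, Functor.id_map] at hn
    show f ≫ e.inv.app X ≫ (CategoryTheory.shiftFunctor C (1 : ℤ)).map b =
      e.inv.app a ≫ (CategoryTheory.shiftFunctor C (1 : ℤ)).map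
        ((CategoryTheory.shiftFunctor C (-1 : ℤ)).map f ≫ b)
    rw [Functor.map_comp, ← Category.assoc, hn, Category.assoc]
  rw [hfun]
  exact (((precomp_bij _ (e.inv.app a)).comp
    (functor_map_bij' (CategoryTheory.shiftFunctor C (1 : ℤ)) _ _)).comp hb).comp
    (functor_map_bij' (CategoryTheory.shiftFunctor C (-1 : ℤ)) a X)

/-- Transport of a contravariant hom-bijection along the shift. -/
lemma shifted_postcomp_bij
    (e' : CategoryTheory.shiftFunctor C (1 : ℤ) ⋙ CategoryTheory.shiftFunctor C (-1 : ℤ) ≅ 𝟭 C)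
    {A B M : C} (b : A ⟶ B)
    (hb : Function.Bijective
      (fun ψ : B ⟶ (CategoryTheory.shiftFunctor C (-1 : ℤ)).obj M => b ≫ ψ)) :
    Function.Bijective
      (fun φ : B⟦(1 : ℤ)⟧ ⟶ M => (CategoryTheory.shiftFunctor C (1 : ℤ)).map b ≫ φ) := by
  apply bij_of_comp'
    (g := fun ψ' : A⟦(1 : ℤ)⟧ ⟶ M => (CategoryTheory.shiftFunctor C (-1 : ℤ)).map ψ')
  · have hn := e'.hom.naturality b
    simp only [Functor.comp_map, Functor.id_map] at hn
    have hb2 : (CategoryTheory.shiftFunctor C (-1 : ℤ)).map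
        ((CategoryTheory.shiftFunctor C (1 : ℤ)).map b) =
        e'.hom.app A ≫ b ≫ e'.inv.app B := by
      rw [← Category.assoc, ← hn, Category.assoc, Iso.hom_inv_id_app, Category.comp_id]
    have hfun : ((fun ψ' : A⟦(1 : ℤ)⟧ ⟶ M =>
          (CategoryTheory.shiftFunctor C (-1 : ℤ)).map ψ') ∘
        (fun φ : B⟦(1 : ℤ)⟧ ⟶ M => (CategoryTheory.shiftFunctor C (1 : ℤ)).map b ≫ φ)) =
        (fun ψ : A ⟶ (CategoryTheory.shiftFunctor C (-1 : ℤ)).obj M => e'.hom.app A ≫ ψ) ∘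
        (fun ψ : B ⟶ (CategoryTheory.shiftFunctor C (-1 : ℤ)).obj M => b ≫ ψ) ∘
        (fun φ : B⟦(1 : ℤ)⟧ ⟶ M =>
          e'.inv.app B ≫ (CategoryTheory.shiftFunctor C (-1 : ℤ)).map φ) := by
      funext φ
      show (CategoryTheory.shiftFunctor C (-1 : ℤ)).map
          ((CategoryTheory.shiftFunctor C (1 : ℤ)).map b ≫ φ) =
        e'.hom.app A ≫ b ≫ e'.inv.app B ≫ (CategoryTheory.shiftFunctor C (-1 : ℤ)).map φ
      rw [Functor.map_comp, hb2]
      simp only [Category.assoc]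
    rw [hfun]
    exact ((precomp_bij _ (e'.hom.app A)).comp hb).comp
      ((precomp_bij _ (e'.inv.app B)).comp
        (functor_map_bij' (CategoryTheory.shiftFunctor C (-1 : ℤ)) _ _))
  · exact (functor_map_bij' (CategoryTheory.shiftFunctor C (-1 : ℤ)) _ _).1

/-- Let `(U, U^⊥[1])` be a t-structure on a triangulated category with coproducts, given with
functorial truncation triangles `tU X → X → tV X → (tU X)⟦1⟧`, and let `c` be an object of
the co-heart.  Then the functor `Hom_H(H̃(c), ?)` on the heart is naturally isomorphic to the
restriction of `Hom_D(c, ?)`, via precomposition with the truncation morphism `c → H̃(c)`;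
and for every `X` in the aisle, postcomposition with the truncation morphism `X → H̃(X)`
induces a bijection `Hom_D(c, X) ≅ Hom_D(c, H̃(X))`. -/
theorem stmt6 [HasCoproducts.{v} C] (U : Set C)
    (hiso : ∀ ⦃X Y : C⦄, (X ≅ Y) → X ∈ U → Y ∈ U)
    (hshift : ∀ ⦃X : C⦄, X ∈ U → X⟦(1 : ℤ)⟧ ∈ U)
    (tU tV : C ⥤ C) (α : tU ⟶ 𝟭 C) (β : 𝟭 C ⟶ tV)
    (δ : ∀ X : C, tV.obj X ⟶ (tU.obj X)⟦(1 : ℤ)⟧)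
    (htU : ∀ X : C, tU.obj X ∈ U) (htV : ∀ X : C, tV.obj X ∈ rPerp C U)
    (htri : ∀ X : C, Triangle.mk (α.app X) (β.app X) (δ X) ∈ distTriang C)
    (c : C) (hc : c ∈ coheartSet C U) :
    (∀ M ∈ heartSet C U,
      Function.Bijective
        (fun φ : (tV.obj (c⟦(-1 : ℤ)⟧))⟦(1 : ℤ)⟧ ⟶ M => truncMap C tV β c ≫ φ)) ∧
    (∀ X ∈ U, Function.Bijective (fun f : c ⟶ X => f ≫ truncMap C tV β X)) := by
  -- L1 : every map from c⟦-1⟧ to an object of U vanishes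
  have L1 : ∀ ⦃A : C⦄, A ∈ U → ∀ h : c⟦(-1 : ℤ)⟧ ⟶ A, h = 0 := by
    intro A hA h
    have h0 : (shiftFunctorCompIsoId C (-1 : ℤ) (1 : ℤ) (by norm_num)).inv.app c ≫
        (CategoryTheory.shiftFunctor C (1 : ℤ)).map h = 0 := hc.2 hA _
    have h1 : (CategoryTheory.shiftFunctor C (1 : ℤ)).map h = 0 := by
      rw [← cancel_epi ((shiftFunctorCompIsoId C (-1 : ℤ) (1 : ℤ)
        (by norm_num)).inv.app c), comp_zero]
      exact h0
    exact (CategoryTheory.shiftFunctor C (1 : ℤ)).map_injective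
      (by rw [h1, Functor.map_zero])
  constructor
  · -- contravariant part
    intro M hM
    have key' : Function.Bijective
        (fun ψ : tV.obj (c⟦(-1 : ℤ)⟧) ⟶ (CategoryTheory.shiftFunctor C (-1 : ℤ)).obj M =>
          β.app (c⟦(-1 : ℤ)⟧) ≫ ψ) := by
      constructor
      · intro ψ₁ ψ₂ h
        have hsub : β.app (c⟦(-1 : ℤ)⟧) ≫ (ψ₁ - ψ₂) = 0 := by
          rw [Preadditive.comp_sub,
            show β.app (c⟦(-1 : ℤ)⟧) ≫ ψ₁ = β.app (c⟦(-1 : ℤ)⟧) ≫ ψ₂ from h, sub_self]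
        obtain ⟨k, hk⟩ := Triangle.yoneda_exact₃ _ (htri (c⟦(-1 : ℤ)⟧)) (ψ₁ - ψ₂) hsub
        rw [hM.2 (hshift (htU (c⟦(-1 : ℤ)⟧))) k] at hk
        exact sub_eq_zero.mp (hk.trans comp_zero)
      · intro g
        have hg : α.app (c⟦(-1 : ℤ)⟧) ≫ g = 0 := hM.2 (htU (c⟦(-1 : ℤ)⟧)) _
        obtain ⟨ψ, hψ⟩ := Triangle.yoneda_exact₂ _ (htri (c⟦(-1 : ℤ)⟧)) g hg
        exact ⟨ψ, hψ.symm⟩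
    have hpost := shifted_postcomp_bij C
      (shiftFunctorCompIsoId C (1 : ℤ) (-1 : ℤ) (by norm_num))
      (β.app (c⟦(-1 : ℤ)⟧)) key'
    have hfin : (fun φ : (tV.obj (c⟦(-1 : ℤ)⟧))⟦(1 : ℤ)⟧ ⟶ M => truncMap C tV β c ≫ φ) =
        (fun ψ : c⟦(-1 : ℤ)⟧⟦(1 : ℤ)⟧ ⟶ M =>
          (shiftFunctorCompIsoId C (-1 : ℤ) (1 : ℤ) (by norm_num)).inv.app c ≫ ψ) ∘
        (fun φ : (tV.obj (c⟦(-1 : ℤ)⟧))⟦(1 : ℤ)⟧ ⟶ M =>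
          (CategoryTheory.shiftFunctor C (1 : ℤ)).map (β.app (c⟦(-1 : ℤ)⟧)) ≫ φ) := by
      funext φ
      show truncMap C tV β c ≫ φ = _
      simp only [truncMap, Category.assoc]
      rfl
    rw [hfin]
    exact (precomp_bij _ _).comp hpost
  · -- covariant part
    intro X hX
    have key : Function.Bijective
        (fun g : c⟦(-1 : ℤ)⟧ ⟶ X⟦(-1 : ℤ)⟧ => g ≫ β.app (X⟦(-1 : ℤ)⟧)) := by
      constructor
      · intro g₁ g₂ h
        have hsub : (g₁ - g₂) ≫ β.app (X⟦(-1 : ℤ)⟧) = 0 := by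
          rw [Preadditive.sub_comp,
            show g₁ ≫ β.app (X⟦(-1 : ℤ)⟧) = g₂ ≫ β.app (X⟦(-1 : ℤ)⟧) from h, sub_self]
        obtain ⟨k, hk⟩ := Triangle.coyoneda_exact₂ _ (htri (X⟦(-1 : ℤ)⟧)) (g₁ - g₂) hsub
        rw [L1 (htU (X⟦(-1 : ℤ)⟧)) k] at hk
        exact sub_eq_zero.mp (hk.trans zero_comp)
      · intro g'
        have hd : g' ≫ δ (X⟦(-1 : ℤ)⟧) = 0 := L1 (hshift (htU (X⟦(-1 : ℤ)⟧))) _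
        obtain ⟨g, hg⟩ := Triangle.coyoneda_exact₃ _ (htri (X⟦(-1 : ℤ)⟧)) g' hd
        exact ⟨g, hg.symm⟩
    have hmain := shifted_precomp_bij C
      (shiftFunctorCompIsoId C (-1 : ℤ) (1 : ℤ) (by norm_num))
      (β.app (X⟦(-1 : ℤ)⟧)) key
    have hfin : (fun f : c ⟶ X => f ≫ truncMap C tV β X) =
        (fun f : c ⟶ X => f ≫
          (shiftFunctorCompIsoId C (-1 : ℤ) (1 : ℤ) (by norm_num)).inv.app X ≫
          (CategoryTheory.shiftFunctor C (1 : ℤ)).map (β.app (X⟦(-1 : ℤ)⟧))) := by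
      funext f
      simp only [truncMap]
    rw [hfin]
    exact hmain
end

section
/- Let D be a triangulated category with coproducts and τ = (U, U^⊥[1]) a t-structure with co-heart C. Then τ is generated by C (meaning U^⊥ equals the class of Y with Hom_D(C[k], Y) = 0 for all C ∈ C and k ≥ 0) if and only if: (a) τ is left nondegenerate (⋂_{k∈ℤ} U[k] = 0), and (b) for each nonzero object M of the heart H there exists a nonzero morphism C → M with C ∈ C. -/
open CategoryTheory CategoryTheory.Limits CategoryTheory.Pretriangulated

universe v u

variable (C : Type u) [Category.{v} C] [Preadditive C] [HasZeroObject C]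
  [HasShift C ℤ] [∀ n : ℤ, (CategoryTheory.shiftFunctor C n).Additive] [Pretriangulated C]

set_option linter.unusedSectionVars false

variable {C}

lemma homZeroConj {X X' Y Y' : C} (e1 : X ≅ X') (e2 : Y ≅ Y')
    (h : ∀ g : X' ⟶ Y', g = 0) (f : X ⟶ Y) : f = 0 := by
  have : f = e1.hom ≫ (e1.inv ≫ f ≫ e2.hom) ≫ e2.inv := by simp
  rw [this, h (e1.inv ≫ f ≫ e2.hom), zero_comp, comp_zero]

lemma shiftConjZero (a : ℤ) {X Y X' Y' : C} (e1 : X⟦a⟧ ≅ X') (e2 : Y⟦a⟧ ≅ Y')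
    (h : ∀ g : X' ⟶ Y', g = 0) (f : X ⟶ Y) : f = 0 := by
  apply (shiftFunctor C a).map_injective
  rw [Functor.map_zero]
  exact homZeroConj e1 e2 h _

lemma homToObj₁Zero (T : Triangle C) (hT : T ∈ distTriang C) {X : C}
    (h2 : ∀ f : X ⟶ T.obj₂, f = 0) (h3 : ∀ f : X ⟶ T.obj₃⟦(-1 : ℤ)⟧, f = 0)
    (f : X ⟶ T.obj₁) : f = 0 := by
  obtain ⟨g, hg⟩ := Triangle.coyoneda_exact₂ _ (inv_rot_of_distTriang _ hT) f (h2 _)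
  rw [hg, show g = 0 from h3 g]; exact zero_comp

lemma homToObj₃ShiftZero (T : Triangle C) (hT : T ∈ distTriang C) {X : C}
    (h1 : ∀ f : X ⟶ T.obj₁⟦(1 : ℤ)⟧⟦(1 : ℤ)⟧, f = 0) (h2 : ∀ f : X ⟶ T.obj₂⟦(1 : ℤ)⟧, f = 0)
    (f : X ⟶ T.obj₃⟦(1 : ℤ)⟧) : f = 0 := by
  obtain ⟨g, hg⟩ := Triangle.coyoneda_exact₁ _
    (rot_of_distTriang _ (rot_of_distTriang _ hT)) f (h1 _)
  rw [hg, show g = 0 from h2 g]; exact zero_comp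

lemma homFromObj₃Zero (T : Triangle C) (hT : T ∈ distTriang C) {Y : C}
    (h2 : ∀ f : T.obj₂ ⟶ Y, f = 0) (h1 : ∀ f : T.obj₁⟦(1 : ℤ)⟧ ⟶ Y, f = 0)
    (f : T.obj₃ ⟶ Y) : f = 0 := by
  obtain ⟨g, hg⟩ := Triangle.yoneda_exact₃ _ hT f (h2 _)
  rw [hg, h1 g, comp_zero]

/-- vanishing of maps from nonneg shifts of coheart objects -/
abbrev Van (U : Set C) (Z : C) : Prop :=
  ∀ c ∈ coheartSet C U, ∀ k : ℤ, 0 ≤ k → ∀ f : c⟦k⟧ ⟶ Z, f = 0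

lemma vanIso {U : Set C} {Z Z' : C} (hZ : Van U Z) (e : Z ≅ Z') : Van U Z' :=
  fun c hc k hk f => homZeroConj (Iso.refl _) e.symm (hZ c hc k hk) f

lemma memShiftNonneg {U : Set C} (hiso : ∀ ⦃X Y : C⦄, (X ≅ Y) → X ∈ U → Y ∈ U)
    (hshift : ∀ ⦃X : C⦄, X ∈ U → X⟦(1 : ℤ)⟧ ∈ U) {c : C} (hc : c ∈ U) :
    ∀ k : ℤ, 0 ≤ k → c⟦k⟧ ∈ U := by
  intro k hk
  obtain ⟨n, rfl⟩ := Int.eq_ofNat_of_zero_le hk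
  induction n with
  | zero => exact hiso ((shiftFunctorZero C ℤ).app c).symm hc
  | succ m ih =>
      exact hiso ((shiftFunctorAdd' C (m : ℤ) 1 (m + 1 : ℕ) (by push_cast; ring)).app c).symm
        (hshift (ih (by positivity)))

lemma rPerpIso {U : Set C} {Y Y' : C} (hY : Y ∈ rPerp C U) (e : Y ≅ Y') : Y' ∈ rPerp C U :=
  fun X hX f => homZeroConj (Iso.refl _) e.symm (fun g => hY hX g) f

lemma vanUp {U : Set C} {Z : C} (hZU : Z ∈ U) (hZ : Van U Z) : Van U (Z⟦(1 : ℤ)⟧) := by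
  intro c hc k hk f
  rcases hk.lt_or_eq with hk' | hk'
  · exact shiftConjZero (-1) ((shiftFunctorAdd' C k (-1) (k - 1) (by ring)).symm.app c)
      ((shiftFunctorCompIsoId C 1 (-1) (by ring)).app Z)
      (hZ c hc (k - 1) (by omega)) f
  · subst hk'
    exact homZeroConj ((shiftFunctorZero C ℤ).app c) (Iso.refl _)
      (fun g => hc.2 hZU g) f

lemma vanDown {U : Set C} {Z : C} (hZ : Van U Z) : Van U (Z⟦(-1 : ℤ)⟧) := by
  intro c hc k hk f
  exact shiftConjZero 1 ((shiftFunctorAdd' C k 1 (k + 1) rfl).symm.app c)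
    ((shiftFunctorCompIsoId C (-1) 1 (by ring)).app Z)
    (hZ c hc (k + 1) (by omega)) f

/-- The crux lemma: if `Z ∈ U` and all maps from nonnegative shifts of coheart objects to `Z`
vanish, then `Z⟦-1⟧ ∈ U` (assuming condition (b) on the heart). -/
lemma goodDown {U : Set C}
    (hiso : ∀ ⦃X Y : C⦄, (X ≅ Y) → X ∈ U → Y ∈ U)
    (hshift : ∀ ⦃X : C⦄, X ∈ U → X⟦(1 : ℤ)⟧ ∈ U)
    (htri : ∀ X : C, ∃ (A B : C) (f : A ⟶ X) (g : X ⟶ B) (h : B ⟶ A⟦(1 : ℤ)⟧),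
      A ∈ U ∧ B ∈ rPerp C U ∧ Triangle.mk f g h ∈ distTriang C)
    (hb : ∀ M ∈ heartSet C U, ¬ IsZero M → ∃ c ∈ coheartSet C U, ∃ f : c ⟶ M, f ≠ 0)
    {Z : C} (hZU : Z ∈ U) (hZ : Van U Z) : Z⟦(-1 : ℤ)⟧ ∈ U := by
  obtain ⟨A, B, f, g, h, hA, hB, hT⟩ := htri (Z⟦(-1 : ℤ)⟧)
  obtain ⟨A', B', f', g', h', hA', hB', hT'⟩ := htri (B⟦(1 : ℤ)⟧)
  -- maps from coheart objects to `B⟦1⟧` vanish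
  have hcM : ∀ c ∈ coheartSet C U, ∀ φ : c ⟶ B⟦(1 : ℤ)⟧, φ = 0 := by
    intro c hc φ
    exact homToObj₃ShiftZero (Triangle.mk f g h) hT
      (fun ψ => hc.2 (hshift hA) ψ)
      (fun ψ => homZeroConj (Iso.refl c)
        ((shiftFunctorCompIsoId C (-1) 1 (by ring)).app Z)
        (fun χ => homZeroConj ((shiftFunctorZero C ℤ).app c).symm (Iso.refl Z)
          (hZ c hc 0 le_rfl) χ) ψ) φ
  -- `g' = 0`
  have hg'0 : g' = 0 := by
    refine shiftConjZero (-1) ((shiftFunctorCompIsoId C 1 (-1) (by ring)).app B)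
      (Iso.refl _) ?_ g'
    intro ψ
    exact homFromObj₃Zero (Triangle.mk f g h) hT
      (fun χ => shiftConjZero 1 ((shiftFunctorCompIsoId C (-1) 1 (by ring)).app Z)
        ((shiftFunctorCompIsoId C (-1) 1 (by ring)).app B')
        (fun ξ => hB' hZU ξ) χ)
      (fun χ => shiftConjZero 1 (Iso.refl _)
        ((shiftFunctorCompIsoId C (-1) 1 (by ring)).app B')
        (fun ξ => hB' (hshift (hshift hA)) ξ) χ) ψ
  -- `A'` is in the heart
  have hA'heart : A' ∈ heartSet C U := by
    refine ⟨hA', fun W hW ψ => ?_⟩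
    refine shiftConjZero 1 (Iso.refl _)
      ((shiftFunctorCompIsoId C (-1) 1 (by ring)).app A') ?_ ψ
    intro χ
    exact homToObj₁Zero (Triangle.mk f' g' h') hT'
      (fun ξ => shiftConjZero (-1) ((shiftFunctorCompIsoId C 1 (-1) (by ring)).app W)
        ((shiftFunctorCompIsoId C 1 (-1) (by ring)).app B)
        (fun ζ => hB hW ζ) ξ)
      (fun ξ => shiftConjZero 1 (Iso.refl _)
        ((shiftFunctorCompIsoId C (-1) 1 (by ring)).app B')
        (fun ζ => hB' (hshift (hshift hW)) ζ) ξ) χ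
  -- `A'` is zero
  have hA'zero : IsZero A' := by
    by_contra hnz
    obtain ⟨c, hc, φ, hφ⟩ := hb A' hA'heart hnz
    refine hφ (homToObj₁Zero (Triangle.mk f' g' h') hT' (fun ξ => hcM c hc ξ) ?_ φ)
    intro ξ
    exact shiftConjZero 1 (Iso.refl _)
      ((shiftFunctorCompIsoId C (-1) 1 (by ring)).app B')
      (fun ζ => hB' (hshift hc.1) ζ) ξ
  -- hence `B⟦1⟧` is zero
  have hM : IsZero (B⟦(1 : ℤ)⟧) := by
    have : IsIso g' := (Triangle.isZero₁_iff_isIso₂ (Triangle.mk f' g' h') hT').1 hA'zero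
    exact IsZero.of_mono_eq_zero g' hg'0
  have hBzero : IsZero B :=
    ((shiftFunctor C (-1 : ℤ)).map_isZero hM).of_iso
      ((shiftFunctorCompIsoId C (1 : ℤ) (-1) (by ring)).app B).symm
  have : IsIso f := (Triangle.isZero₃_iff_isIso₁ (Triangle.mk f g h) hT).1 hBzero
  exact hiso (asIso f) hA

lemma shiftsMem {U : Set C}
    (hiso : ∀ ⦃X Y : C⦄, (X ≅ Y) → X ∈ U → Y ∈ U)
    (hshift : ∀ ⦃X : C⦄, X ∈ U → X⟦(1 : ℤ)⟧ ∈ U)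
    (htri : ∀ X : C, ∃ (A B : C) (f : A ⟶ X) (g : X ⟶ B) (h : B ⟶ A⟦(1 : ℤ)⟧),
      A ∈ U ∧ B ∈ rPerp C U ∧ Triangle.mk f g h ∈ distTriang C)
    (hb : ∀ M ∈ heartSet C U, ¬ IsZero M → ∃ c ∈ coheartSet C U, ∃ f : c ⟶ M, f ≠ 0)
    {Z : C} (hZU : Z ∈ U) (hZ : Van U Z) : ∀ k : ℤ, Z⟦k⟧ ∈ U := by
  have key : ∀ k : ℤ, Z⟦k⟧ ∈ U ∧ Van U (Z⟦k⟧) := by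
    intro k
    induction k using Int.induction_on with
    | zero => exact ⟨hiso ((shiftFunctorZero C ℤ).app Z).symm hZU,
        vanIso hZ ((shiftFunctorZero C ℤ).app Z).symm⟩
    | succ i ih =>
        have e := (shiftFunctorAdd' C (i : ℤ) 1 (i + 1) rfl).app Z
        exact ⟨hiso e.symm (hshift ih.1), vanIso (vanUp ih.1 ih.2) e.symm⟩
    | pred i ih =>
        have e := (shiftFunctorAdd' C (-i : ℤ) (-1) (-i - 1) (by ring)).app Z
        exact ⟨hiso e.symm (goodDown hiso hshift htri hb ih.1 ih.2),
          vanIso (vanDown ih.2) e.symm⟩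
  exact fun k => (key k).1

/-- Let `D` be a triangulated category with coproducts and `(U, U^⊥[1])` a t-structure on `D`
with heart `H` and co-heart `C`.  The t-structure is generated by its co-heart (that is,
`U^⊥ = {Y : Hom(c⟦k⟧, Y) = 0 for all c in the co-heart and all k ≥ 0}`) if and only if it is
left nondegenerate (`⋂_{k ∈ ℤ} U[k] = 0`) and every nonzero object of the heart receives a
nonzero morphism from an object of the co-heart. -/
theorem stmt8 [HasCoproducts.{v} C] (U : Set C)
    (hiso : ∀ ⦃X Y : C⦄, (X ≅ Y) → X ∈ U → Y ∈ U)
    (hshift : ∀ ⦃X : C⦄, X ∈ U → X⟦(1 : ℤ)⟧ ∈ U)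
    (htri : ∀ X : C, ∃ (A B : C) (f : A ⟶ X) (g : X ⟶ B) (h : B ⟶ A⟦(1 : ℤ)⟧),
      A ∈ U ∧ B ∈ rPerp C U ∧ Triangle.mk f g h ∈ distTriang C) :
    (rPerp C U =
      {Y : C | ∀ c ∈ coheartSet C U, ∀ k : ℤ, 0 ≤ k → ∀ f : c⟦k⟧ ⟶ Y, f = 0}) ↔
    ((∀ X : C, (∀ k : ℤ, X⟦k⟧ ∈ U) → IsZero X) ∧
     (∀ M ∈ heartSet C U, ¬ IsZero M → ∃ c ∈ coheartSet C U, ∃ f : c ⟶ M, f ≠ 0)) := by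
  constructor
  · intro hgen
    constructor
    · intro X hX
      have hXU : X ∈ U := hiso ((shiftFunctorZero C ℤ).app X) (hX 0)
      have hXperp : X ∈ rPerp C U := by
        rw [hgen]
        intro c hc k hk f
        exact shiftConjZero (-k) ((shiftFunctorCompIsoId C k (-k) (by ring)).app c)
          ((shiftFunctorAdd' C (-k - 1) 1 (-k) (by ring)).app X)
          (fun g => hc.2 (hX (-k - 1)) g) f
      rw [IsZero.iff_id_eq_zero]
      exact hXperp hXU (𝟙 X)
    · intro M hM hMnz
      by_contra hno
      push_neg at hno
      have hMperp : M ∈ rPerp C U := by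
        rw [hgen]
        intro c hc k hk f
        rcases hk.lt_or_eq with hk' | hk'
        · exact shiftConjZero (-1) ((shiftFunctorAdd' C k (-1) (k - 1) (by ring)).symm.app c)
            (Iso.refl _)
            (fun g => hM.2 (memShiftNonneg hiso hshift hc.1 (k - 1) (by omega)) g) f
        · subst hk'
          exact homZeroConj ((shiftFunctorZero C ℤ).app c) (Iso.refl _)
            (hno c hc) f
      apply hMnz
      rw [IsZero.iff_id_eq_zero]
      exact hMperp hM.1 (𝟙 M)
  · rintro ⟨ha, hb⟩
    ext Y
    simp only [Set.mem_setOf_eq]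
    constructor
    · intro hY c hc k hk f
      exact hY (memShiftNonneg hiso hshift hc.1 k hk) f
    · intro hY
      obtain ⟨A, B, f, g, h, hA, hB, hT⟩ := htri Y
      have hvanA : Van U A := by
        intro c hc k hk φ
        exact homToObj₁Zero (Triangle.mk f g h) hT (hY c hc k hk)
          (fun ψ => shiftConjZero 1 ((shiftFunctorAdd' C k 1 (k + 1) rfl).symm.app c)
            ((shiftFunctorCompIsoId C (-1) 1 (by ring)).app B)
            (fun χ => hB (memShiftNonneg hiso hshift hc.1 (k + 1) (by omega)) χ) ψ) φ
      have hAzero : IsZero A := ha A (shiftsMem hiso hshift htri hb hA hvanA)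
      have : IsIso g := (Triangle.isZero₁_iff_isIso₂ (Triangle.mk f g h) hT).1 hAzero
      exact rPerpIso hB (asIso (g : Y ⟶ B)).symm
end

section
/- Let D be a triangulated category with coproducts and let T be a partial silting set in D, with associated t-structure τ = (U, U^⊥[1]) where U = ^⊥(T^{⊥≤0}). Let f : T' → U be a morphism with T' a coproduct of objects of T and U in U, completed to a triangle T' → U → Z → T'[1]. Then f is a Sum(T)-precover of U if and only if Z lies in U[1]. -/
open CategoryTheory CategoryTheory.Limits CategoryTheory.Pretriangulated

universe v u

variable (C : Type u) [Category.{v} C] [Preadditive C] [HasZeroObject C]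
  [HasShift C ℤ] [∀ n : ℤ, (CategoryTheory.shiftFunctor C n).Additive] [Pretriangulated C]
  [HasCoproducts.{v} C]

/-- `𝒯^{⊥≤0}`: the objects `Y` with `Hom(T⟦k⟧, Y) = 0` for all `T ∈ 𝒯` and all `k ≥ 0`. -/
def perpLE (𝒯 : Set C) : Set C :=
  {Y | ∀ ⦃T : C⦄, T ∈ 𝒯 → ∀ k : ℤ, 0 ≤ k → ∀ f : T⟦k⟧ ⟶ Y, f = 0}

/-- The left orthogonal `^⊥S` of a class of objects. -/
def lPerp (S : Set C) : Set C := {X | ∀ ⦃Y : C⦄, Y ∈ S → ∀ f : X ⟶ Y, f = 0}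

/-- The aisle `^⊥(𝒯^{⊥≤0})` associated to a set of objects `𝒯`. -/
def aisleOf (𝒯 : Set C) : Set C := lPerp C (perpLE C 𝒯)

/-- `Sum(𝒯)`: the objects isomorphic to set-indexed coproducts of objects of `𝒯`. -/
def sumSet (𝒯 : Set C) : Set C :=
  {X | ∃ (I : Type v) (f : I → C), (∀ i, f i ∈ 𝒯) ∧ Nonempty (X ≅ ∐ f)}

/-- A set of objects `𝒯` is partial silting: the pair `(^⊥(𝒯^{⊥≤0}), 𝒯^{⊥<0})` is a
t-structure (which, the closure and orthogonality conditions being automatic, amounts to the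
existence of the truncation triangles, the co-aisle `𝒯^{⊥<0}[-1]` being `𝒯^{⊥≤0}`), and
`Hom(T, ?)` vanishes on the shifted aisle `U⟦1⟧` for every `T ∈ 𝒯`. -/
structure IsPartialSilting (𝒯 : Set C) : Prop where
  triangle : ∀ X : C, ∃ (A B : C) (f : A ⟶ X) (g : X ⟶ B) (h : B ⟶ A⟦(1 : ℤ)⟧),
    A ∈ aisleOf C 𝒯 ∧ B ∈ perpLE C 𝒯 ∧ Triangle.mk f g h ∈ distTriang C
  vanishing : ∀ ⦃T : C⦄, T ∈ 𝒯 → ∀ ⦃X : C⦄, X ∈ aisleOf C 𝒯 →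
    ∀ f : T ⟶ X⟦(1 : ℤ)⟧, f = 0

/-- Transport vanishing of Hom groups along the shift adjunction, one direction. -/
lemma homZero_shift (n m : ℤ) (hnm : n + m = 0) (A B : C)
    (H : ∀ f : A ⟶ B⟦m⟧, f = 0) (f : A⟦n⟧ ⟶ B) : f = 0 := by
  exact ((shiftEquiv' C n m hnm).toAdjunction.homEquiv A B).injective
    ((H _).trans (H _).symm)

/-- Transport vanishing of Hom groups along the shift adjunction, other direction. -/
lemma homZero_unshift (n m : ℤ) (hnm : n + m = 0) (A B : C)
    (H : ∀ f : A⟦n⟧ ⟶ B, f = 0) (g : A ⟶ B⟦m⟧) : g = 0 := by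
  exact ((shiftEquiv' C n m hnm).toAdjunction.homEquiv A B).symm.injective
    ((H _).trans (H _).symm)

/-- `𝒯^{⊥≤0}` is closed under the shift `⟦-1⟧`. -/
lemma perpLE_shift_neg (𝒯 : Set C) {Y : C} (hY : Y ∈ perpLE C 𝒯) :
    Y⟦(-1 : ℤ)⟧ ∈ perpLE C 𝒯 := by
  intro T hT k hk g
  refine homZero_unshift C 1 (-1) (by omega) (T⟦k⟧) Y (fun f => ?_) g
  have i : (shiftFunctor C (k + 1)).obj T ≅ (shiftFunctor C (1 : ℤ)).obj ((shiftFunctor C k).obj T) :=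
    (shiftFunctorAdd C k 1).app T
  calc f = i.inv ≫ (i.hom ≫ f) := by rw [Iso.inv_hom_id_assoc]
    _ = 0 := by rw [hY hT (k + 1) (by omega) (i.hom ≫ f), comp_zero]

/-- The aisle is closed under the shift `⟦1⟧`. -/
lemma mem_aisle_shift (𝒯 : Set C) {W : C} (hW : W ∈ aisleOf C 𝒯) :
    W⟦(1 : ℤ)⟧ ∈ aisleOf C 𝒯 := by
  intro Y hY f
  exact homZero_shift C 1 (-1) (by omega) W Y
    (fun g => hW (perpLE_shift_neg C 𝒯 hY) g) f

/-- Every element of `𝒯` lies in the aisle. -/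
lemma elem_mem_aisle (𝒯 : Set C) {T : C} (hT : T ∈ 𝒯) : T ∈ aisleOf C 𝒯 := by
  intro Y hY f
  have i : (shiftFunctor C (0 : ℤ)).obj T ≅ T := (shiftFunctorZero C ℤ).app T
  calc f = i.inv ≫ (i.hom ≫ f) := by rw [Iso.inv_hom_id_assoc]
    _ = 0 := by rw [hY hT 0 le_rfl (i.hom ≫ f), comp_zero]

/-- If all maps from elements of `𝒯` to `Y` vanish, so do all maps from `Sum 𝒯` to `Y`. -/
lemma sum_hom_zero (𝒯 : Set C) {Y : C} (h0 : ∀ ⦃T : C⦄, T ∈ 𝒯 → ∀ g : T ⟶ Y, g = 0)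
    {T' : C} (hT' : T' ∈ sumSet C 𝒯) (φ : T' ⟶ Y) : φ = 0 := by
  obtain ⟨I, fI, hfI, ⟨i⟩⟩ := hT'
  have hψ : i.inv ≫ φ = 0 := by
    refine Sigma.hom_ext _ _ fun j => ?_
    rw [comp_zero, h0 (hfI j) (Sigma.ι fI j ≫ (i.inv ≫ φ))]
  calc φ = i.hom ≫ (i.inv ≫ φ) := by rw [Iso.hom_inv_id_assoc]
    _ = 0 := by rw [hψ, comp_zero]

/-- `Sum 𝒯` is contained in the aisle. -/
lemma sum_mem_aisle (𝒯 : Set C) {T' : C} (hT' : T' ∈ sumSet C 𝒯) :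
    T' ∈ aisleOf C 𝒯 := by
  intro Y hY φ
  exact sum_hom_zero C 𝒯 (fun T hT g => elem_mem_aisle C 𝒯 hT hY g) hT' φ

/-- Each element of `𝒯` lies in `Sum 𝒯`. -/
lemma singleton_mem_sumSet (𝒯 : Set C) {T : C} (hT : T ∈ 𝒯) : T ∈ sumSet C 𝒯 := by
  refine ⟨PUnit, fun _ => T, fun _ => hT, ⟨?_⟩⟩
  refine ⟨Sigma.ι (fun _ : PUnit => T) PUnit.unit, Sigma.desc fun _ => 𝟙 T, by simp, ?_⟩
  refine Sigma.hom_ext _ _ fun j => ?_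
  cases j
  simp

/-- The aisle is closed under extensions. -/
lemma aisle_ext (𝒯 : Set C) (T : Triangle C) (hT : T ∈ distTriang C)
    (h1 : T.obj₁ ∈ aisleOf C 𝒯) (h3 : T.obj₃ ∈ aisleOf C 𝒯) :
    T.obj₂ ∈ aisleOf C 𝒯 := by
  intro Y hY φ
  obtain ⟨ψ, hψ⟩ := Triangle.yoneda_exact₂ T hT φ (h1 hY _)
  rw [hψ, h3 hY ψ, comp_zero]

/-- Let `𝒯` be a partial silting set in a triangulated category with coproducts, with
associated t-structure of aisle `U = ^⊥(𝒯^{⊥≤0})`.  Let `f : T' → X` be a morphism with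
`T' ∈ Sum(𝒯)` and `X ∈ U`, completed into a distinguished triangle `T' → X → Z → T'⟦1⟧`.
Then `f` is a `Sum(𝒯)`-precover of `X` if and only if `Z ∈ U⟦1⟧`. -/
theorem stmt9 (𝒯 : Set C) (hsilt : IsPartialSilting C 𝒯)
    (T' X Z : C) (hT' : T' ∈ sumSet C 𝒯) (hX : X ∈ aisleOf C 𝒯)
    (f : T' ⟶ X) (g : X ⟶ Z) (h : Z ⟶ T'⟦(1 : ℤ)⟧)
    (htri : Triangle.mk f g h ∈ distTriang C) :
    (∀ Y ∈ sumSet C 𝒯, ∀ u : Y ⟶ X, ∃ v : Y ⟶ T', v ≫ f = u) ↔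
    Z⟦(-1 : ℤ)⟧ ∈ aisleOf C 𝒯 := by
  have e : (Z⟦(-1 : ℤ)⟧)⟦(1 : ℤ)⟧ ≅ Z :=
    (shiftFunctorCompIsoId C (-1 : ℤ) (1 : ℤ) (by omega)).app Z
  constructor
  · intro hpre
    -- Step 1: all maps from elements of `𝒯` to `Z` vanish.
    have step1 : ∀ ⦃T : C⦄, T ∈ 𝒯 → ∀ α : T ⟶ Z, α = 0 := by
      intro T hT α
      have hα : α ≫ h = 0 :=
        hsilt.vanishing hT (sum_mem_aisle C 𝒯 hT') (α ≫ h)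
      obtain ⟨β, hβ⟩ : ∃ β : T ⟶ X, α = β ≫ g := Triangle.coyoneda_exact₃ _ htri α hα
      have hβ' : α = β ≫ g := hβ
      obtain ⟨γ, hγ⟩ := hpre T (singleton_mem_sumSet C 𝒯 hT) β
      have hfg : f ≫ g = 0 := comp_distTriang_mor_zero₁₂ _ htri
      rw [hβ', ← hγ, Category.assoc, hfg, comp_zero]
    -- `Z` lies in the aisle (extension of `T'⟦1⟧` by `X`).
    have hZU : Z ∈ aisleOf C 𝒯 :=
      aisle_ext C 𝒯 _ (rot_of_distTriang _ htri) hX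
        (mem_aisle_shift C 𝒯 (sum_mem_aisle C 𝒯 hT'))
    have hZ'U : (Z⟦(-1 : ℤ)⟧)⟦(1 : ℤ)⟧ ∈ aisleOf C 𝒯 := by
      intro Y hY φ
      have h1 : e.inv ≫ φ = 0 := hZU hY _
      calc φ = e.hom ≫ (e.inv ≫ φ) := by rw [Iso.hom_inv_id_assoc]
        _ = 0 := by rw [h1, comp_zero]
    -- Truncation triangle of `Z⟦-1⟧`.
    obtain ⟨A, B, a, b, c, hA, hB, htri2⟩ := hsilt.triangle (Z⟦(-1 : ℤ)⟧)
    have htri3 := rot_of_distTriang _ (rot_of_distTriang _ (rot_of_distTriang _ htri2))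
    have htri4 := rot_of_distTriang _ htri3
    -- `B⟦1⟧ ∈ 𝒯^{⊥≤0}`.
    have hB1 : B⟦(1 : ℤ)⟧ ∈ perpLE C 𝒯 := by
      intro T hT k hk φ
      rcases eq_or_lt_of_le hk with hk0 | hk1
      · subst hk0
        have i0 : (shiftFunctor C (0 : ℤ)).obj T ≅ T := (shiftFunctorZero C ℤ).app T
        suffices hs : ∀ ψ : T ⟶ B⟦(1 : ℤ)⟧, ψ = 0 by
          calc φ = i0.hom ≫ (i0.inv ≫ φ) := by simp
            _ = 0 := by rw [hs (i0.inv ≫ φ), comp_zero]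
        intro ψ
        have hv : ψ ≫ ((Triangle.mk a b c).rotate.rotate.rotate).mor₃ = 0 :=
          hsilt.vanishing hT (mem_aisle_shift C 𝒯 hA) _
        obtain ⟨β, hβ⟩ : ∃ β : T ⟶ (Z⟦(-1 : ℤ)⟧)⟦(1 : ℤ)⟧, ψ = β ≫ ((Triangle.mk a b c).rotate.rotate.rotate).mor₂ :=
          Triangle.coyoneda_exact₃ _ htri3 ψ hv
        have hβ0 : β = 0 := by
          have h1 : β ≫ e.hom = 0 := step1 hT (β ≫ e.hom)
          calc β = (β ≫ e.hom) ≫ e.inv := by simp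
            _ = 0 := by rw [h1, zero_comp]
        rw [hβ, hβ0]
        exact zero_comp
      · refine homZero_unshift C (-1) 1 (by omega) (T⟦k⟧) B (fun ψ => ?_) φ
        have i : (shiftFunctor C (k + (-1))).obj T ≅
            (shiftFunctor C (-1 : ℤ)).obj ((shiftFunctor C k).obj T) :=
          (shiftFunctorAdd C k (-1)).app T
        calc ψ = i.inv ≫ (i.hom ≫ ψ) := by rw [Iso.inv_hom_id_assoc]
          _ = 0 := by rw [hB hT (k + (-1)) (by omega) (i.hom ≫ ψ), comp_zero]
    -- `B⟦1⟧` lies in the aisle (extension of `A⟦1⟧⟦1⟧` by `Z⟦-1⟧⟦1⟧`).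
    have hB1U : B⟦(1 : ℤ)⟧ ∈ aisleOf C 𝒯 :=
      aisle_ext C 𝒯 _ htri4 hZ'U
        (mem_aisle_shift C 𝒯 (mem_aisle_shift C 𝒯 hA))
    have hid : 𝟙 (B⟦(1 : ℤ)⟧) = 0 := hB1U hB1 _
    -- Conclude `Z⟦-1⟧` lies in the aisle.
    intro Y hY φ
    obtain ⟨ψ, hψ⟩ : ∃ ψ : B ⟶ Y, φ = b ≫ ψ := Triangle.yoneda_exact₂ _ htri2 φ (hA hY _)
    have hψ' : φ = b ≫ ψ := hψ
    have hψ0 : ψ = 0 := by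
      have H : ∀ ρ : B ⟶ (Y⟦(1 : ℤ)⟧)⟦(-1 : ℤ)⟧, ρ = 0 := by
        refine homZero_unshift C 1 (-1) (by omega) B (Y⟦(1 : ℤ)⟧) (fun ρ => ?_)
        calc ρ = 𝟙 (B⟦(1 : ℤ)⟧) ≫ ρ := by rw [Category.id_comp]
          _ = 0 := by rw [hid, zero_comp]
      have j : (Y⟦(1 : ℤ)⟧)⟦(-1 : ℤ)⟧ ≅ Y :=
        (shiftFunctorCompIsoId C (1 : ℤ) (-1 : ℤ) (by omega)).app Y
      calc ψ = (ψ ≫ j.inv) ≫ j.hom := by simp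
        _ = 0 := by rw [H (ψ ≫ j.inv), zero_comp]
    rw [hψ', hψ0, comp_zero]
  · intro hZ1 Y hY u
    have H : ∀ φ : Y ⟶ (Z⟦(-1 : ℤ)⟧)⟦(1 : ℤ)⟧, φ = 0 :=
      fun φ => sum_hom_zero C 𝒯 (fun T hT ψ => hsilt.vanishing hT hZ1 ψ) hY φ
    have hg : u ≫ g = 0 := by
      calc u ≫ g = ((u ≫ g) ≫ e.inv) ≫ e.hom := by simp
        _ = 0 := by rw [H ((u ≫ g) ≫ e.inv), zero_comp]
    obtain ⟨v, hv⟩ := Triangle.coyoneda_exact₂ _ htri u hg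
    exact ⟨v, hv.symm⟩
end

section
/- Let D be a triangulated category with products and coproducts satisfying the Brown representability theorem, let T be a set of compact objects of D, and for each T ∈ T let D(T) be its Brown–Comenetz dual (representing the functor Hom_k(Hom_D(T, ?), E), where E is the minimal injective cogenerator of Mod-k). Then the product ∏_{T∈T} D(T) is a pure-injective object of D. -/
open CategoryTheory CategoryTheory.Limits CategoryTheory.Pretriangulated DirectSum

universe v u w

variable {C : Type u} [Category.{v} C] [Preadditive C]

/-- The canonical map `⊕ᵢ Hom(P, Mᵢ) ⟶ Hom(P, Q)` determined by morphisms `jᵢ : Mᵢ ⟶ Q`. -/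
noncomputable def cmap (P : C) {I : Type v} [DecidableEq I] (M : I → C) {Q : C}
    (j : ∀ i, M i ⟶ Q) : (⨁ (i : I), (P ⟶ M i)) →+ (P ⟶ Q) :=
  DirectSum.toAddMonoid fun i =>
    AddMonoidHom.mk' (fun φ => φ ≫ j i) (fun _ _ => Preadditive.add_comp _ _ _ _ _ _)

lemma cmap_of (P : C) {I : Type v} [DecidableEq I] (M : I → C) {Q : C}
    (j : ∀ i, M i ⟶ Q) (i : I) (φ : P ⟶ M i) :
    cmap P M j (DirectSum.of (fun i => (P ⟶ M i)) i φ) = φ ≫ j i := by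
  simp [cmap]

/-- Let `D` be a triangulated `k`-category with products and coproducts satisfying Brown
representability, let `(Tᵢ)` be a set of compact objects and let `D(Tᵢ)` be the
Brown–Comenetz dual of `Tᵢ`, i.e. an object representing `Hom_k(Hom_D(Tᵢ, ?), E)` where `E`
is an (minimal) injective cogenerator of `Mod-k`.  Then `∏ᵢ D(Tᵢ)` is a pure-injective
object: for each set `I`, precomposition with the canonical morphism
`λ : Y^{(I)} ⟶ Y^I` (where `Y = ∏ᵢ D(Tᵢ)`) is a surjection
`Hom(Y^I, Y) ⟶ Hom(Y^{(I)}, Y)`. -/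
theorem stmt12 {k : Type w} [CommRing k] [CategoryTheory.Linear k C]
    [HasZeroObject C] [HasShift C ℤ] [∀ n : ℤ, (CategoryTheory.shiftFunctor C n).Additive]
    [Pretriangulated C] [HasProducts.{v} C] [HasCoproducts.{v} C]
    (E : Type v) [AddCommGroup E] [Module k E]
    (hinj : Module.Injective k E)
    (hcog : ∀ (M : Type v) [AddCommGroup M] [Module k M] (x : M), x ≠ 0 →
      ∃ φ : M →ₗ[k] E, φ x ≠ 0)
    {ι : Type v} (T : ι → C)
    (hcpt : ∀ (i : ι) (J : Type v) [DecidableEq J] (g : J → C),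
      Function.Bijective (cmap (T i) g (fun j => Sigma.ι g j)))
    (D : ι → C)
    (e : ∀ (i : ι) (X : C), (X ⟶ D i) ≃ₗ[k] ((T i ⟶ X) →ₗ[k] E))
    (hnat : ∀ (i : ι) (X X' : C) (f : X' ⟶ X) (g : X ⟶ D i),
      e i X' (f ≫ g) = (e i X g).comp (CategoryTheory.Linear.rightComp k (T i) f)) :
    ∀ (I : Type v) [DecidableEq I],
      Function.Surjective (fun g : (∏ᶜ fun _ : I => (∏ᶜ D)) ⟶ (∏ᶜ D) =>
        (Sigma.desc fun i : I => Pi.lift fun j : I =>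
          if i = j then 𝟙 (∏ᶜ D) else 0) ≫ g) := by
  intro I _
  set Y := ∏ᶜ D with hY
  set lam : (∐ fun _ : I => Y) ⟶ (∏ᶜ fun _ : I => Y) :=
    Sigma.desc fun i : I => Pi.lift fun j : I => if i = j then 𝟙 Y else 0 with hlam
  intro f
  -- key computation: the composite `cmap x ≫ lam ≫ π j` recovers the `j`-th component.
  have key : ∀ (i : ι) (x : ⨁ _ : I, (T i ⟶ Y)) (j : I),
      cmap (T i) (fun _ : I => Y) (fun j => Sigma.ι (fun _ : I => Y) j) x ≫ lam ≫ Pi.π (fun _ : I => Y) j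
        = x j := by
    intro i x j
    induction x using DirectSum.induction_on with
    | zero => simp
    | of j0 y =>
      rw [cmap_of, Category.assoc, hlam, colimit.ι_desc_assoc]
      simp only [Discrete.functor_obj_eq_as, Cofan.mk_pt, Cofan.mk_ι_app, limit.lift_π, Fan.mk_pt, Fan.mk_π_app]
      by_cases h : j0 = j
      · subst h
        rw [DirectSum.of_eq_same, if_pos rfl, Category.comp_id]
      · rw [DirectSum.of_eq_of_ne _ _ _ (Ne.symm h), if_neg h, Limits.comp_zero]
    | add a b ha hb =>
      rw [map_add, Preadditive.add_comp, ha, hb]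
      rfl
  -- injectivity of postcomposition with `lam`
  have hr : ∀ i : ι,
      Function.Injective (CategoryTheory.Linear.rightComp k (T i) lam) := by
    intro i
    rw [injective_iff_map_eq_zero]
    intro h hh
    obtain ⟨x, hx⟩ := (hcpt i I (fun _ : I => Y)).surjective h
    have hx0 : x = 0 := by
      refine DFinsupp.ext fun j => ?_
      have := key i x j
      rw [← Category.assoc, hx] at this
      have hh' : h ≫ lam = 0 := hh
      rw [hh', Limits.zero_comp] at this
      exact this.symm
    rw [← hx, hx0, map_zero]
  -- for each `i`, extend `f ≫ π i` along `lam`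
  have hext : ∀ i : ι, ∃ g : (∏ᶜ fun _ : I => Y) ⟶ D i, lam ≫ g = f ≫ Pi.π D i := by
    intro i
    obtain ⟨ψ, hψ⟩ := hinj.out (CategoryTheory.Linear.rightComp k (T i) lam) (hr i)
      (e i _ (f ≫ Pi.π D i))
    refine ⟨(e i _).symm ψ, (e i _).injective ?_⟩
    rw [hnat, LinearEquiv.apply_symm_apply]
    exact LinearMap.ext fun x => hψ x
  choose g hg using hext
  refine ⟨Pi.lift g, ?_⟩
  apply Pi.hom_ext
  intro j
  simpa [Category.assoc] using hg j
end
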